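/- Let 0 < α ≤ β and let M := [α,β] × S². Define f^∞(r,s,ξ,η) := ‖ξ‖ + χ_{{0}}(ξ)‖η‖ + ‖rη + s⊗ξ‖, where χ_{{0}}(ξ) = 1 if ξ = 0 and χ_{{0}}(ξ) = 0 otherwise. For ν ∈ S¹ let ν^⊥ denote the rotation of ν by π/2, let S_ν := {y ∈ ℝ² : |y·ν| ≤ 1/2}, and let Q_ν be the open unit square centered at the origin with two sides orthogonal to ν. For a, b ∈ M define K_Lip(a,b,ν) := inf{ ∫_{Q_ν} f^∞(φ(y), ψ(y), ∇φ(y), ∇ψ(y)) dy : θ = (φ,ψ) : S_ν → M Lipschitz, θ(y + ν^⊥) = θ(y) for all y ∈ S_ν, θ(y) = a whenever y·ν = −1/2, θ(y) = b whenever y·ν = 1/2 }. Then there exists a constant C > 0, depending only on α and β, such that for all a, b ∈ M and all ν ∈ S¹: K_Lip(a,b,ν) ≤ C‖a − b‖. -/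

import Mathlib

open scoped Classical
open MeasureTheory

noncomputable section

abbrev E2 : Type := EuclideanSpace ℝ (Fin 2)
abbrev E3 : Type := EuclideanSpace ℝ (Fin 3)
abbrev E32 : Type := EuclideanSpace ℝ (Fin 3 × Fin 2)

/-- `ℝ × ℝ³` endowed with the Euclidean (ℓ²) norm, i.e. `ℝ⁴`. -/
abbrev PR : Type := WithLp 2 (ℝ × E3)

/-- The tensor product `s ⊗ ξ`, viewed as a 3×2 matrix endowed with the
Frobenius (Euclidean) norm. -/
def tens (s : E3) (ξ : E2) : E32 := WithLp.toLp 2 (fun p : Fin 3 × Fin 2 => s p.1 * ξ p.2)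

/-- The recession function
`f^∞(r,s,ξ,η) = ‖ξ‖ + χ_{{0}}(ξ)‖η‖ + ‖rη + s⊗ξ‖`. -/
def finf (r : ℝ) (s : E3) (ξ : E2) (η : E32) : ℝ :=
  ‖ξ‖ + (if ξ = 0 then (1 : ℝ) else 0) * ‖η‖ + ‖r • η + tens s ξ‖

/-- The rotation of `ν ∈ ℝ²` by `π/2`. -/
def perp (ν : E2) : E2 := WithLp.toLp 2 (fun i : Fin 2 => if i = 0 then -(ν 1) else ν 0)

/-- The closed slab `S_ν = {y ∈ ℝ² : |y·ν| ≤ 1/2}`. -/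
def slab (ν : E2) : Set E2 := {y | |(inner ℝ y ν : ℝ)| ≤ 1/2}

/-- The open unit square `Q_ν` centered at the origin with two sides
orthogonal to `ν`. -/
def cubeNu (ν : E2) : Set E2 :=
  {y | |(inner ℝ y ν : ℝ)| < 1/2 ∧ |(inner ℝ y (perp ν) : ℝ)| < 1/2}

/-- The gradient `∇φ(y) ∈ ℝ²` of a scalar function `φ : ℝ² → ℝ`. -/
def gradv (φ : E2 → ℝ) (y : E2) : E2 :=
  WithLp.toLp 2 (fun j : Fin 2 => fderiv ℝ φ y (EuclideanSpace.single j 1))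

/-- The gradient `∇ψ(y) ∈ ℝ^{3×2}` of a vector-valued function `ψ : ℝ² → ℝ³`. -/
def gradm (ψ : E2 → E3) (y : E2) : E32 :=
  WithLp.toLp 2 (fun p : Fin 3 × Fin 2 => fderiv ℝ ψ y (EuclideanSpace.single p.2 1) p.1)

/-- The jump energy density `K_Lip(a,b,ν)` with Lipschitz transition profiles:
the infimum of `∫_{Q_ν} f^∞(φ, ψ, ∇φ, ∇ψ)` over Lipschitz maps
`θ = (φ,ψ) : S_ν → [α,β] × S²` that are 1-periodic in the direction `ν^⊥`
and take the values `a` and `b` on the faces `{y·ν = -1/2}` and `{y·ν = 1/2}`. -/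
def KLip (α β : ℝ) (a b : PR) (ν : E2) : ℝ :=
  sInf {v : ℝ | ∃ φ : E2 → ℝ, ∃ ψ : E2 → E3, ∃ K : NNReal,
    LipschitzOnWith K φ (slab ν) ∧ LipschitzOnWith K ψ (slab ν) ∧
    (∀ y ∈ slab ν, φ y ∈ Set.Icc α β ∧ ‖ψ y‖ = 1) ∧
    (∀ y ∈ slab ν, φ (y + perp ν) = φ y ∧ ψ (y + perp ν) = ψ y) ∧
    (∀ y : E2, (inner ℝ y ν : ℝ) = -(1/2) → φ y = a.ofLp.1 ∧ ψ y = a.ofLp.2) ∧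
    (∀ y : E2, (inner ℝ y ν : ℝ) = 1/2 → φ y = b.ofLp.1 ∧ ψ y = b.ofLp.2) ∧
    v = ∫ y in cubeNu ν, finf (φ y) (ψ y) (gradv φ y) (gradm ψ y)}

/-! Interpolate linearly in the `[α, β]` component. In the `S²` component, follow the chord from
`a` to `b` pushed out along a unit vector orthogonal to both, and renormalize: this path stays on
the sphere and is `O(‖a - b‖)`-Lipschitz, also for antipodal endpoints. Composing
both paths with the clamped coordinate `y·ν + 1/2` gives an admissible profile whose gradients are
`O(‖a - b‖)`; since `f^∞` is bounded linearly by the gradients and `Q_ν` lies in the unit disc,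
the energy is at most a constant times `‖a - b‖`. -/

open Set
open scoped NNReal RealInnerProductSpace

section SpherePath

variable {F : Type*} [NormedAddCommGroup F] [InnerProductSpace ℝ F]

theorem norm_normalize_sub_normalize_le {x : F} (hx : x ≠ 0) (y : F) :
    ‖NormedSpace.normalize x - NormedSpace.normalize y‖ ≤ 2 * ‖x - y‖ / ‖x‖ := by
  have hx₀ : 0 < ‖x‖ := norm_pos_iff.2 hx
  have hsplit : NormedSpace.normalize x - NormedSpace.normalize y =
      ‖x‖⁻¹ • (x - y) + (‖x‖⁻¹ * (‖y‖ - ‖x‖)) • NormedSpace.normalize y := by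
    rcases eq_or_ne y 0 with rfl | hy
    · simp [NormedSpace.normalize]
    · simp only [NormedSpace.normalize, smul_smul]
      match_scalars
      · field_simp
      · field_simp; ring
  have hy : ‖NormedSpace.normalize y‖ ≤ 1 := by
    rcases eq_or_ne y 0 with rfl | hy
    · simp
    · exact (NormedSpace.norm_normalize_eq_one_iff.2 hy).le
  rw [hsplit]
  calc _ ≤ ‖x‖⁻¹ * ‖x - y‖ + ‖x‖⁻¹ * |‖y‖ - ‖x‖| * ‖NormedSpace.normalize y‖ := by
        refine (norm_add_le _ _).trans_eq ?_
        rw [norm_smul, norm_smul, Real.norm_eq_abs, Real.norm_eq_abs, abs_mul,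
          abs_inv, abs_norm]
    _ ≤ ‖x‖⁻¹ * ‖x - y‖ + ‖x‖⁻¹ * ‖x - y‖ * 1 := by
        gcongr
        rw [abs_sub_comm]
        exact abs_norm_sub_norm_le x y
    _ = 2 * ‖x - y‖ / ‖x‖ := by ring

theorem LipschitzOnWith.normalize {α : Type*} [PseudoMetricSpace α] {f : α → F} {s : Set α}
    {K δ : ℝ≥0} (hf : LipschitzOnWith K f s) (hδ : 0 < δ) (hfδ : ∀ x ∈ s, δ ≤ ‖f x‖) :
    LipschitzOnWith (2 * K / δ) (NormedSpace.normalize ∘ f) s := by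
  refine LipschitzOnWith.of_dist_le_mul fun x hx y hy => ?_
  have hfx : f x ≠ 0 := norm_pos_iff.1 ((NNReal.coe_pos.2 hδ).trans_le (hfδ x hx))
  rw [dist_eq_norm, NNReal.coe_div, NNReal.coe_mul, NNReal.coe_two]
  calc _ ≤ 2 * ‖f x - f y‖ / ‖f x‖ := norm_normalize_sub_normalize_le hfx _
    _ ≤ 2 * (K * dist x y) / δ := by
        gcongr
        · rw [← dist_eq_norm]; exact hf.dist_le_mul x hx y hy
        · exact hfδ x hx
    _ = 2 * K / δ * dist x y := by ring

theorem exists_norm_eq_one_inner_eq_zero_pair [FiniteDimensional ℝ F]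
    (hF : 2 < Module.finrank ℝ F) (u v : F) :
    ∃ m : F, ‖m‖ = 1 ∧ ⟪u, m⟫ = 0 ∧ ⟪v, m⟫ = 0 := by
  set U := Submodule.span ℝ ({u, v} : Set F)
  have hU : Module.finrank ℝ U ≤ 2 := by
    refine (finrank_span_le_card ({u, v} : Set F)).trans ?_
    simpa using Finset.card_insert_le u {v}
  have hUperp : Uᗮ ≠ ⊥ := by
    intro h
    have := U.finrank_add_finrank_orthogonal
    rw [h, finrank_bot] at this
    omega
  obtain ⟨x, hx, hx₀⟩ := Submodule.exists_mem_ne_zero_of_ne_bot hUperp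
  refine ⟨NormedSpace.normalize x, NormedSpace.norm_normalize_eq_one_iff.2 hx₀, ?_, ?_⟩ <;>
    refine Submodule.inner_right_of_mem_orthogonal (K := U) (Submodule.subset_span ?_)
      (Submodule.smul_mem _ _ hx) <;> simp

/-- The bump `2 ‖v - u‖ t (1 - t)` along `m` vanishes with `‖v - u‖`, yet keeps the path at distance
`≥ 1/2` from the origin when `u`, `v`, `m` are unit vectors with `m ⊥ u, v`, even for `v = -u`. -/
def bowedChord (u v m : F) (t : ℝ) : F :=
  AffineMap.lineMap u v t + (2 * ‖v - u‖ * (t * (1 - t))) • m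

theorem bowedChord_zero (u v m : F) : bowedChord u v m 0 = u := by simp [bowedChord]

theorem bowedChord_one (u v m : F) : bowedChord u v m 1 = v := by simp [bowedChord]

theorem norm_lineMap_sq_of_norm_eq_one {u v : F} (hu : ‖u‖ = 1) (hv : ‖v‖ = 1) (t : ℝ) :
    ‖AffineMap.lineMap u v t‖ ^ 2 = 1 - ‖v - u‖ ^ 2 * (t * (1 - t)) := by
  have huv : ⟪u, v - u⟫ = -(‖v - u‖ ^ 2 / 2) := by
    rw [norm_sub_sq_real, inner_sub_right, real_inner_self_eq_norm_sq, real_inner_comm, hu, hv]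
    ring
  rw [AffineMap.lineMap_apply_module', add_comm, norm_add_sq_real, real_inner_smul_right, huv,
    norm_smul, mul_pow, Real.norm_eq_abs, sq_abs, hu]
  ring

theorem norm_bowedChord_sq {u v m : F} (hu : ‖u‖ = 1) (hv : ‖v‖ = 1) (hm : ‖m‖ = 1)
    (hum : ⟪u, m⟫ = 0) (hvm : ⟪v, m⟫ = 0) (t : ℝ) :
    ‖bowedChord u v m t‖ ^ 2 = 1 - ‖v - u‖ ^ 2 * (t * (1 - t)) * (1 - 4 * (t * (1 - t))) := by
  have horth : ⟪AffineMap.lineMap u v t, m⟫ = 0 := by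
    rw [AffineMap.lineMap_apply_module, inner_add_left, real_inner_smul_left,
      real_inner_smul_left, hum, hvm]
    ring
  rw [bowedChord, norm_add_sq_real, real_inner_smul_right, horth,
    norm_lineMap_sq_of_norm_eq_one hu hv, norm_smul, mul_pow, Real.norm_eq_abs, sq_abs, hm]
  ring

theorem half_le_norm_bowedChord {u v m : F} (hu : ‖u‖ = 1) (hv : ‖v‖ = 1) (hm : ‖m‖ = 1)
    (hum : ⟪u, m⟫ = 0) (hvm : ⟪v, m⟫ = 0) (t : ℝ) : 1 / 2 ≤ ‖bowedChord u v m t‖ := by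
  have hd : ‖v - u‖ ≤ 2 := (norm_sub_le v u).trans (by rw [hu, hv]; norm_num)
  have hsq := norm_bowedChord_sq hu hv hm hum hvm t
  nlinarith [norm_nonneg (v - u), norm_nonneg (bowedChord u v m t),
    sq_nonneg (t * (1 - t) - 1 / 8)]

theorem lipschitzOnWith_bowedChord (u v : F) {m : F} (hm : ‖m‖ = 1) :
    LipschitzOnWith (3 * ‖v - u‖₊) (bowedChord u v m) (Icc 0 1) := by
  refine LipschitzOnWith.of_dist_le_mul fun s hs t ht => ?_
  have hst : |1 - s - t| ≤ 1 := abs_le.2 ⟨by linarith [hs.2, ht.2], by linarith [hs.1, ht.1]⟩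
  have hsplit : bowedChord u v m s - bowedChord u v m t =
      (s - t) • (v - u) + (2 * ‖v - u‖ * ((s - t) * (1 - s - t))) • m := by
    simp only [bowedChord, AffineMap.lineMap_apply_module']
    module
  rw [dist_eq_norm, hsplit, Real.dist_eq, NNReal.coe_mul, coe_nnnorm]
  calc _ ≤ |s - t| * ‖v - u‖ + 2 * ‖v - u‖ * (|s - t| * |1 - s - t|) := by
        refine (norm_add_le _ _).trans_eq ?_
        rw [norm_smul, norm_smul, hm, Real.norm_eq_abs, Real.norm_eq_abs, abs_mul, abs_mul,
          abs_mul, abs_two, abs_norm]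
        ring
    _ ≤ |s - t| * ‖v - u‖ + 2 * ‖v - u‖ * (|s - t| * 1) := by gcongr
    _ = 3 * ‖v - u‖ * |s - t| := by ring

theorem exists_lipschitzOnWith_path_of_norm_eq_one [FiniteDimensional ℝ F]
    (hF : 2 < Module.finrank ℝ F) {u v : F} (hu : ‖u‖ = 1) (hv : ‖v‖ = 1) :
    ∃ γ : ℝ → F, LipschitzOnWith (12 * ‖v - u‖₊) γ (Icc 0 1) ∧ (∀ t, ‖γ t‖ = 1) ∧
      γ 0 = u ∧ γ 1 = v := by
  obtain ⟨m, hm, hum, hvm⟩ := exists_norm_eq_one_inner_eq_zero_pair hF u v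
  have hfar (t : ℝ) : 1 / 2 ≤ ‖bowedChord u v m t‖ := half_le_norm_bowedChord hu hv hm hum hvm t
  refine ⟨NormedSpace.normalize ∘ bowedChord u v m, ?_, fun t => ?_, ?_, ?_⟩
  · refine ((lipschitzOnWith_bowedChord u v hm).normalize (δ := 1 / 2) (by norm_num)
      (fun t _ => by exact_mod_cast hfar t)).weaken (le_of_eq ?_)
    rw [one_div, div_inv_eq_mul]; ring
  · have : (0 : ℝ) < 1 / 2 := by norm_num
    exact NormedSpace.norm_normalize_eq_one_iff.2 (norm_pos_iff.1 (this.trans_le (hfar t)))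
  · simp [bowedChord_zero, NormedSpace.normalize_eq_self_of_norm_eq_one hu]
  · simp [bowedChord_one, NormedSpace.normalize_eq_self_of_norm_eq_one hv]

end SpherePath

theorem EuclideanSpace.norm_le_card_mul_of_abs_le {ι : Type*} [Fintype ι]
    {x : EuclideanSpace ℝ ι} {c : ℝ} (h : ∀ i, |x i| ≤ c) : ‖x‖ ≤ Fintype.card ι * c := by
  rcases isEmpty_or_nonempty ι with hι | ⟨⟨i₀⟩⟩
  · simp [Subsingleton.elim x 0]
  have hc : 0 ≤ c := (abs_nonneg _).trans (h i₀)
  have hcard : √(Fintype.card ι : ℝ) ≤ Fintype.card ι :=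
    Real.sqrt_le_self_iff.2 (Or.inr (by exact_mod_cast Fintype.card_pos_iff.2 ⟨i₀⟩))
  calc ‖x‖ = √(∑ i, ‖x i‖ ^ 2) := EuclideanSpace.norm_eq x
    _ ≤ √(∑ _i : ι, c ^ 2) := by
        gcongr with i
        rw [Real.norm_eq_abs]
        exact h i
    _ = √(Fintype.card ι : ℝ) * c := by
        rw [Finset.sum_const, Finset.card_univ, nsmul_eq_mul, Real.sqrt_mul (Nat.cast_nonneg _),
          Real.sqrt_sq hc]
    _ ≤ Fintype.card ι * c := by gcongr

theorem norm_fderiv_apply_single_le {ι F : Type*} [Fintype ι] [DecidableEq ι]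
    [NormedAddCommGroup F] [NormedSpace ℝ F] {f : EuclideanSpace ℝ ι → F} {K : ℝ≥0}
    (hf : LipschitzWith K f) (y : EuclideanSpace ℝ ι) (j : ι) :
    ‖fderiv ℝ f y (EuclideanSpace.single j 1)‖ ≤ K :=
  calc _ ≤ ‖fderiv ℝ f y‖ * ‖EuclideanSpace.single j (1 : ℝ)‖ := (fderiv ℝ f y).le_opNorm _
    _ ≤ K * 1 := by
        rw [PiLp.norm_single, norm_one]
        gcongr
        exact norm_fderiv_le_of_lipschitz ℝ hf
    _ = K := mul_one _

theorem norm_gradv_le {φ : E2 → ℝ} {K : ℝ≥0} (hφ : LipschitzWith K φ) (y : E2) :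
    ‖gradv φ y‖ ≤ 2 * K := by
  simpa using EuclideanSpace.norm_le_card_mul_of_abs_le fun j =>
    (Real.norm_eq_abs _).symm.trans_le (norm_fderiv_apply_single_le hφ y j)

theorem norm_gradm_le {ψ : E2 → E3} {K : ℝ≥0} (hψ : LipschitzWith K ψ) (y : E2) :
    ‖gradm ψ y‖ ≤ 6 * K := by
  have := EuclideanSpace.norm_le_card_mul_of_abs_le (x := gradm ψ y) (c := K) fun p =>
    (PiLp.norm_apply_le _ p.1).trans (norm_fderiv_apply_single_le hψ y p.2)
  simpa using this

theorem norm_tens (s : E3) (ξ : E2) : ‖tens s ξ‖ = ‖s‖ * ‖ξ‖ := by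
  rw [EuclideanSpace.norm_eq, EuclideanSpace.norm_eq, EuclideanSpace.norm_eq,
    ← Real.sqrt_mul (by positivity), Finset.sum_mul_sum, ← Finset.univ_product_univ,
    Finset.sum_product]
  simp [tens, mul_pow]

theorem finf_nonneg (r : ℝ) (s : E3) (ξ : E2) (η : E32) : 0 ≤ finf r s ξ η := by
  unfold finf
  split_ifs <;> positivity

theorem finf_le (r : ℝ) (s : E3) (ξ : E2) (η : E32) :
    finf r s ξ η ≤ (1 + ‖s‖) * ‖ξ‖ + (1 + |r|) * ‖η‖ := by
  have hχ : (if ξ = 0 then (1 : ℝ) else 0) * ‖η‖ ≤ ‖η‖ := by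
    split_ifs <;> simp
  have hsum : ‖r • η + tens s ξ‖ ≤ |r| * ‖η‖ + ‖s‖ * ‖ξ‖ := by
    simpa [norm_smul, norm_tens] using norm_add_le (r • η) (tens s ξ)
  unfold finf
  linarith

theorem inner_perp_self (ν : E2) : ⟪perp ν, ν⟫ = 0 := by
  simp [perp, PiLp.inner_apply, Fin.sum_univ_two]
  ring

theorem inner_sq_add_inner_perp_sq (y ν : E2) :
    ⟪y, ν⟫ ^ 2 + ⟪y, perp ν⟫ ^ 2 = ‖y‖ ^ 2 * ‖ν‖ ^ 2 := by
  simp [perp, PiLp.inner_apply, Fin.sum_univ_two, EuclideanSpace.norm_sq_eq]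
  ring

theorem cubeNu_subset_ball {ν : E2} (hν : ‖ν‖ = 1) : cubeNu ν ⊆ Metric.ball 0 1 := by
  rintro y ⟨h₁, h₂⟩
  have hy := inner_sq_add_inner_perp_sq y ν
  rw [hν, one_pow, mul_one] at hy
  rw [mem_ball_zero_iff]
  nlinarith [sq_abs ⟪y, ν⟫, sq_abs ⟪y, perp ν⟫, abs_nonneg ⟪y, ν⟫, abs_nonneg ⟪y, perp ν⟫,
    norm_nonneg y]

theorem setIntegral_cubeNu_le {ν : E2} (hν : ‖ν‖ = 1) {f : E2 → ℝ} {c : ℝ}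
    (hf : ∀ y, |f y| ≤ c) : ∫ y in cubeNu ν, f y ≤ Real.pi * c := by
  have hc : 0 ≤ c := (abs_nonneg _).trans (hf 0)
  have hvol : volume (cubeNu ν) ≤ ENNReal.ofReal Real.pi := by
    simpa using measure_mono (μ := volume) (cubeNu_subset_ball hν)
  calc _ ≤ ‖∫ y in cubeNu ν, f y‖ := Real.le_norm_self _
    _ ≤ c * volume.real (cubeNu ν) :=
        norm_setIntegral_le_of_norm_le_const (hvol.trans_lt ENNReal.ofReal_lt_top)
          fun y _ => hf y
    _ ≤ c * Real.pi := by
        gcongr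
        exact ENNReal.toReal_le_of_le_ofReal Real.pi_pos.le hvol
    _ = Real.pi * c := mul_comm _ _

def slabCoord (ν y : E2) : ℝ := Set.projIcc (0 : ℝ) 1 zero_le_one (⟪y, ν⟫ + 1 / 2)

theorem slabCoord_mem_Icc (ν y : E2) : slabCoord ν y ∈ Icc 0 1 := Subtype.prop _

theorem lipschitzWith_slabCoord (ν : E2) : LipschitzWith ‖ν‖₊ (slabCoord ν) := by
  have hinner : LipschitzWith ‖ν‖₊ fun y : E2 => ⟪y, ν⟫ + 1 / 2 :=
    LipschitzWith.of_dist_le_mul fun x z => by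
      rw [Real.dist_eq, add_sub_add_right_eq_sub, ← inner_sub_left, dist_eq_norm, coe_nnnorm,
        mul_comm]
      exact abs_real_inner_le_norm _ _
  have := (LipschitzWith.subtype_val _).comp ((LipschitzWith.projIcc zero_le_one).comp hinner)
  rw [one_mul, one_mul] at this
  exact this

theorem slabCoord_add_perp (ν y : E2) : slabCoord ν (y + perp ν) = slabCoord ν y := by
  rw [slabCoord, slabCoord, inner_add_left, inner_perp_self, add_zero]

theorem slabCoord_of_inner_eq_neg_half {ν y : E2} (hy : ⟪y, ν⟫ = -(1 / 2)) :
    slabCoord ν y = 0 := by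
  rw [slabCoord, hy, neg_add_cancel, Set.projIcc_left]

theorem slabCoord_of_inner_eq_half {ν y : E2} (hy : ⟪y, ν⟫ = 1 / 2) : slabCoord ν y = 1 := by
  rw [slabCoord, hy, add_halves, Set.projIcc_right]

theorem KLip_le_setIntegral {α β : ℝ} {a b : PR} {ν : E2} {φ : E2 → ℝ} {ψ : E2 → E3}
    {K : ℝ≥0} (hφ : LipschitzOnWith K φ (slab ν)) (hψ : LipschitzOnWith K ψ (slab ν))
    (hM : ∀ y ∈ slab ν, φ y ∈ Icc α β ∧ ‖ψ y‖ = 1)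
    (hper : ∀ y ∈ slab ν, φ (y + perp ν) = φ y ∧ ψ (y + perp ν) = ψ y)
    (ha : ∀ y : E2, ⟪y, ν⟫ = -(1 / 2) → φ y = a.ofLp.1 ∧ ψ y = a.ofLp.2)
    (hb : ∀ y : E2, ⟪y, ν⟫ = 1 / 2 → φ y = b.ofLp.1 ∧ ψ y = b.ofLp.2) :
    KLip α β a b ν ≤ ∫ y in cubeNu ν, finf (φ y) (ψ y) (gradv φ y) (gradm ψ y) := by
  refine csInf_le ⟨0, ?_⟩ ⟨φ, ψ, K, hφ, hψ, hM, hper, ha, hb, rfl⟩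
  rintro _ ⟨_, _, -, -, -, -, -, -, -, rfl⟩
  exact setIntegral_nonneg_of_ae (.of_forall fun y => finf_nonneg _ _ _ _)

theorem KLip_le_of_lipschitzOnWith_path {α β : ℝ} {a b : PR} {ν : E2} (hν : ‖ν‖ = 1)
    {g : ℝ → ℝ} {γ : ℝ → E3} {K : ℝ≥0} (hg : LipschitzOnWith K g (Icc 0 1))
    (hγ : LipschitzOnWith K γ (Icc 0 1)) (hM : ∀ t ∈ Icc (0 : ℝ) 1, g t ∈ Icc α β ∧ ‖γ t‖ = 1)
    (h₀ : g 0 = a.ofLp.1 ∧ γ 0 = a.ofLp.2) (h₁ : g 1 = b.ofLp.1 ∧ γ 1 = b.ofLp.2) :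
    KLip α β a b ν ≤ Real.pi * (10 + 6 * max |α| |β|) * K := by
  have hq : LipschitzOnWith 1 (slabCoord ν) univ := by
    have hν' : ‖ν‖₊ = 1 := by ext; simpa using hν
    simpa [hν'] using (lipschitzWith_slabCoord ν).lipschitzOnWith (s := univ)
  have hmaps : MapsTo (slabCoord ν) univ (Icc 0 1) := fun y _ => slabCoord_mem_Icc ν y
  have hφ : LipschitzWith K (g ∘ slabCoord ν) := by
    simpa using lipschitzOnWith_univ.1 (hg.comp hq hmaps)
  have hψ : LipschitzWith K (γ ∘ slabCoord ν) := by
    simpa using lipschitzOnWith_univ.1 (hγ.comp hq hmaps)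
  have hbound (y : E2) : |finf (g (slabCoord ν y)) (γ (slabCoord ν y)) (gradv (g ∘ slabCoord ν) y)
      (gradm (γ ∘ slabCoord ν) y)| ≤ (10 + 6 * max |α| |β|) * K := by
    obtain ⟨⟨hαg, hgβ⟩, hγ1⟩ := hM _ (slabCoord_mem_Icc ν y)
    rw [abs_of_nonneg (finf_nonneg _ _ _ _)]
    calc _ ≤ _ := finf_le _ _ _ _
      _ ≤ (1 + 1) * (2 * K) + (1 + max |α| |β|) * (6 * K) := by
          rw [hγ1]
          gcongr
          · exact norm_gradv_le hφ y
          · exact abs_le_max_abs_abs hαg hgβ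
          · exact norm_gradm_le hψ y
      _ = _ := by ring
  calc _ ≤ ∫ y in cubeNu ν, finf ((g ∘ slabCoord ν) y) ((γ ∘ slabCoord ν) y)
        (gradv (g ∘ slabCoord ν) y) (gradm (γ ∘ slabCoord ν) y) :=
        KLip_le_setIntegral hφ.lipschitzOnWith hψ.lipschitzOnWith
          (fun y _ => hM _ (slabCoord_mem_Icc ν y))
          (fun y _ => by simp only [Function.comp_apply, slabCoord_add_perp, and_self])
          (fun y hy => by simpa [slabCoord_of_inner_eq_neg_half hy] using h₀)
          (fun y hy => by simpa [slabCoord_of_inner_eq_half hy] using h₁)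
    _ ≤ Real.pi * ((10 + 6 * max |α| |β|) * K) := setIntegral_cubeNu_le hν hbound
    _ = _ := by ring

theorem stmt19_general (α β : ℝ) :
    ∃ C : ℝ, 0 < C ∧
      ∀ a b : PR, (a.ofLp.1 ∈ Set.Icc α β ∧ ‖a.ofLp.2‖ = 1) → (b.ofLp.1 ∈ Set.Icc α β ∧ ‖b.ofLp.2‖ = 1) →
      ∀ ν : E2, ‖ν‖ = 1 →
      KLip α β a b ν ≤ C * ‖a - b‖ := by
  refine ⟨12 * Real.pi * (10 + 6 * max |α| |β|), by positivity, ?_⟩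
  rintro a b ⟨ha₁, ha₂⟩ ⟨hb₁, hb₂⟩ ν hν
  obtain ⟨γ, hγ, hγ_norm, hγ₀, hγ₁⟩ :=
    exists_lipschitzOnWith_path_of_norm_eq_one (by simp) ha₂ hb₂
  set K := max (nndist a.ofLp.1 b.ofLp.1) (12 * ‖b.ofLp.2 - a.ofLp.2‖₊)
  have hK : (K : ℝ) ≤ 12 * ‖a - b‖ := by
    have h₁ : dist a.ofLp.1 b.ofLp.1 ≤ ‖a - b‖ := (WithLp.dist_fst_le a b).trans_eq (dist_eq_norm a b)
    have h₂ : ‖b.ofLp.2 - a.ofLp.2‖ ≤ ‖a - b‖ := by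
      rw [← dist_eq_norm', ← dist_eq_norm]
      exact WithLp.dist_snd_le a b
    simp only [K, NNReal.coe_max, NNReal.coe_mul, coe_nndist, coe_nnnorm]
    exact max_le (by linarith [norm_nonneg (a - b)]) (by push_cast; linarith)
  calc KLip α β a b ν ≤ Real.pi * (10 + 6 * max |α| |β|) * K :=
        KLip_le_of_lipschitzOnWith_path hν
          ((lipschitzWith_lineMap _ _).lipschitzOnWith.weaken le_sup_left)
          (hγ.weaken le_sup_right)
          (fun t ht => ⟨(convex_Icc α β).lineMap_mem ha₁ hb₁ ht, hγ_norm t⟩)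
          ⟨AffineMap.lineMap_apply_zero _ _, hγ₀⟩ ⟨AffineMap.lineMap_apply_one _ _, hγ₁⟩
    _ ≤ Real.pi * (10 + 6 * max |α| |β|) * (12 * ‖a - b‖) := by gcongr
    _ = 12 * Real.pi * (10 + 6 * max |α| |β|) * ‖a - b‖ := by ring

theorem stmt19 (α β : ℝ) (hα : 0 < α) (hαβ : α ≤ β) :
    ∃ C : ℝ, 0 < C ∧
      ∀ a b : PR, (a.ofLp.1 ∈ Set.Icc α β ∧ ‖a.ofLp.2‖ = 1) → (b.ofLp.1 ∈ Set.Icc α β ∧ ‖b.ofLp.2‖ = 1) →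
      ∀ ν : E2, ‖ν‖ = 1 →
      KLip α β a b ν ≤ C * ‖a - b‖ :=
  stmt19_general α β
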